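/- Let x₁, …, x_L be pairwise coprime positive integers with all x_i ≤ M and e ≠ 0. If for every k ≠ i* the entry x_k does not divide e, then i* is the unique index k ∈ {1,…,L} such that x_k divides e·x_{i*} and |e·x_{i*}/x_k| ≤ M, provided |e| ≤ M. -/
import Mathlib


theorem single_round_exact_localization (L : ℕ) (M : ℤ) (x : Fin L → ℤ)
    (hpos : ∀ i, 0 < x i) (hle : ∀ i, x i ≤ M)
    (hcop : ∀ i j : Fin L, i ≠ j → IsCoprime (x i) (x j))
    (e : ℤ) (he : e ≠ 0) (heM : |e| ≤ M) (istar : Fin L)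
    (hnodiv : ∀ k : Fin L, k ≠ istar → ¬ x k ∣ e) :
    ∀ k : Fin L, (x k ∣ e * x istar ∧ |e * x istar / x k| ≤ M) ↔ k = istar := by
  intro k
  constructor
  · rintro ⟨hdvd, -⟩
    by_contra hk
    exact hnodiv k hk ((hcop k istar hk).dvd_of_dvd_mul_right hdvd)
  · rintro rfl
    refine ⟨dvd_mul_left _ _, ?_⟩
    rw [Int.mul_ediv_cancel _ (hpos k).ne']
    exact heM
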